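/- Let μ be a probability measure on ℝ with support contained in an open interval (a,b), let φ : ℝ → ℝ be a C¹, non-decreasing, bounded function, and let s(ε) be an upper bound for μ([E−ε/2, E+ε/2]) over all E ∈ ℝ. Then for every ε > 0, ∫ (φ(λ+ε) − φ(λ)) dμ(λ) ≤ s(ε)·(φ(b+ε) − φ(a)). -/

import Mathlib

/-!
The increment `φ (x + ε) - φ x` is the mass that the Stieltjes measure `dφ` gives to
`(x, x + ε]`. By Tonelli, `∫ dφ((x, x + ε]) dμ(x) = ∫ μ([t - ε, t)) dφ(t)`; every
`μ([t - ε, t))` is at most `s ε`, and it vanishes unless `t ∈ (a, b + ε]`, a set of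
`dφ`-mass `φ (b + ε) - φ a`.
-/

open MeasureTheory Set
open scoped ENNReal

theorem MeasureTheory.lintegral_measure_Ioc_add_eq_lintegral_measure_Ico_sub (μ ν : Measure ℝ)
    [SFinite μ] [SFinite ν] (ε : ℝ) :
    ∫⁻ x, ν (Ioc x (x + ε)) ∂μ = ∫⁻ t, μ (Ico (t - ε) t) ∂ν := by
  have hT : MeasurableSet {p : ℝ × ℝ | p.1 < p.2 ∧ p.2 ≤ p.1 + ε} :=
    (measurableSet_lt measurable_fst measurable_snd).inter
      (measurableSet_le measurable_snd (measurable_fst.add_const ε))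
  have hIoc (x : ℝ) : Prod.mk x ⁻¹' {p : ℝ × ℝ | p.1 < p.2 ∧ p.2 ≤ p.1 + ε} = Ioc x (x + ε) :=
    rfl
  have hIco (t : ℝ) : (fun x => (x, t)) ⁻¹' {p : ℝ × ℝ | p.1 < p.2 ∧ p.2 ≤ p.1 + ε} =
      Ico (t - ε) t := by
    ext x
    simp only [mem_preimage, mem_ofPred_eq, mem_Ico]
    constructor <;> intro h <;> constructor <;> linarith [h.1, h.2]
  simp_rw [← hIoc, ← hIco, ← Measure.prod_apply hT, Measure.prod_apply_symm hT]

theorem StieltjesFunction.lintegral_measure_Ioc_add_le (f : StieltjesFunction ℝ) (μ : Measure ℝ)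
    [SFinite μ] {a b ε : ℝ} {c : ℝ≥0∞}
    (hsupp : μ (Ioo a b)ᶜ = 0) (hc : ∀ t, μ (Ico (t - ε) t) ≤ c) :
    ∫⁻ x, f.measure (Ioc x (x + ε)) ∂μ ≤ c * ENNReal.ofReal (f (b + ε) - f a) := by
  have hnull : ∀ t ∉ Ioc a (b + ε), μ (Ico (t - ε) t) = 0 := by
    refine fun t ht => measure_mono_null (fun x hx (hab : x ∈ Ioo a b) => ht ?_) hsupp
    exact ⟨hab.1.trans hx.2, by linarith [hx.1, hab.2]⟩
  calc ∫⁻ x, f.measure (Ioc x (x + ε)) ∂μ = ∫⁻ t, μ (Ico (t - ε) t) ∂f.measure :=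
        lintegral_measure_Ioc_add_eq_lintegral_measure_Ico_sub μ f.measure ε
    _ ≤ ∫⁻ t, (Ioc a (b + ε)).indicator (fun _ => c) t ∂f.measure := by
        refine lintegral_mono fun t => ?_
        by_cases ht : t ∈ Ioc a (b + ε)
        · simpa [ht] using hc t
        · simp [ht, hnull t ht]
    _ = c * ENNReal.ofReal (f (b + ε) - f a) := by
        rw [lintegral_indicator_const measurableSet_Ioc, f.measure_Ioc]

theorem MeasureTheory.Measure.eq_zero_of_forall_measure_Icc_add_eq_zero {μ : Measure ℝ}
    {ε : ℝ} (hε : 0 < ε) (h : ∀ x, μ (Icc x (x + ε)) = 0) : μ = 0 := by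
  rw [← Measure.measure_univ_eq_zero, ← iUnion_Icc_add_zsmul hε 0]
  refine measure_iUnion_null fun n => ?_
  simpa [add_one_mul] using h (n • ε)

theorem stmt0_general (μ : Measure ℝ) [IsProbabilityMeasure μ] (a b : ℝ)
    (hsupp : μ (Set.Ioo a b)ᶜ = 0)
    (φ : ℝ → ℝ) (hφC1 : ContDiff ℝ 1 φ) (hφmono : Monotone φ)
    (s : ℝ → ℝ)
    (hs : ∀ ε > 0, ∀ E : ℝ,
      μ (Set.Icc (E - ε / 2) (E + ε / 2)) ≤ ENNReal.ofReal (s ε)) :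
    ∀ ε > 0, ∫ l, (φ (l + ε) - φ l) ∂μ ≤ s ε * (φ (b + ε) - φ a) := by
  intro ε hε
  let f : StieltjesFunction ℝ := ⟨φ, hφmono, fun x => hφC1.continuous.continuousWithinAt⟩
  have hIcc (x : ℝ) : μ (Icc x (x + ε)) ≤ ENNReal.ofReal (s ε) := by
    simpa [add_assoc] using hs ε hε (x + ε / 2)
  have hsε : 0 ≤ s ε := by
    by_contra! hneg
    refine IsProbabilityMeasure.ne_zero μ (Measure.eq_zero_of_forall_measure_Icc_add_eq_zero hε
      fun x => nonpos_iff_eq_zero.mp ?_)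
    simpa [ENNReal.ofReal_of_nonpos hneg.le] using hIcc x
  have hab : a < b := by
    refine nonempty_Ioo.mp (nonempty_of_measure_ne_zero (μ := μ) ?_)
    simp [(prob_compl_eq_zero_iff measurableSet_Ioo).mp hsupp]
  have hincr (x : ℝ) : 0 ≤ φ (x + ε) - φ x := sub_nonneg.2 (hφmono (by linarith))
  rw [integral_eq_lintegral_of_nonneg_ae (ae_of_all _ hincr)
    (hφC1.continuous.comp (continuous_add_const ε) |>.sub hφC1.continuous).aestronglyMeasurable]
  refine ENNReal.toReal_le_of_le_ofReal (mul_nonneg hsε (sub_nonneg.2 (hφmono (by linarith)))) ?_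
  calc ∫⁻ x, ENNReal.ofReal (φ (x + ε) - φ x) ∂μ = ∫⁻ x, f.measure (Ioc x (x + ε)) ∂μ := by
        simp only [f.measure_Ioc]
        rfl
    _ ≤ ENNReal.ofReal (s ε) * ENNReal.ofReal (φ (b + ε) - φ a) :=
        f.lintegral_measure_Ioc_add_le μ hsupp fun t =>
          (measure_mono Ico_subset_Icc_self).trans (by simpa using hIcc (t - ε))
    _ = ENNReal.ofReal (s ε * (φ (b + ε) - φ a)) := (ENNReal.ofReal_mul hsε).symm

/-- Partial integration lemma for singular distributions (Lemma `l-sme`):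
if `μ` is a probability measure supported in `(a,b)`, `φ` is C¹, non-decreasing and
bounded, and `s ε` bounds `μ [E-ε/2, E+ε/2]` uniformly in `E`, then
`∫ (φ(λ+ε) - φ(λ)) dμ ≤ s(ε) · (φ(b+ε) - φ(a))`. -/
theorem stmt0 (μ : Measure ℝ) [IsProbabilityMeasure μ] (a b : ℝ)
    (hsupp : μ (Set.Ioo a b)ᶜ = 0)
    (φ : ℝ → ℝ) (hφC1 : ContDiff ℝ 1 φ) (hφmono : Monotone φ)
    (hφbdd : ∃ M, ∀ x, |φ x| ≤ M)
    (s : ℝ → ℝ)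
    (hs : ∀ ε > 0, ∀ E : ℝ,
      μ (Set.Icc (E - ε / 2) (E + ε / 2)) ≤ ENNReal.ofReal (s ε)) :
    ∀ ε > 0, ∫ l, (φ (l + ε) - φ l) ∂μ ≤ s ε * (φ (b + ε) - φ a) :=
  stmt0_general μ a b hsupp φ hφC1 hφmono s hs
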